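/- Let (Ω, 𝔽, P) be a probability space and let z : ℝ^p × Ω → ℝ^d be such that for each ω the map φ ↦ z(φ, ω) is differentiable, z(φ, ·) and its derivative D_φ z(φ, ·) are Bochner integrable for each φ, and differentiation under the integral sign is valid both for φ ↦ E[z(φ, ·)] and for φ ↦ E[‖z(φ, ·) − c‖²] (uniformly dominated derivatives in a neighborhood of φ₀). Let m(φ) = E[z(φ, ·)] and R(φ) = (1/d) E[‖z(φ, ·) − m(φ)‖²]. Then R is differentiable at φ₀ and ∇_φ R(φ₀)[h] = (2/d) E[⟨D_φ z(φ₀, ·)[h], z(φ₀, ·) − m(φ₀)⟩] for every h ∈ ℝ^p; i.e., the gradient of the expected intra-class variance equals the expectation of the per-sample gradient computed with the mean m held fixed, because the cross term involving ∇_φ m(φ₀) vanishes since E[z(φ₀, ·) − m(φ₀)] = 0. -/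

import Mathlib

/-!
By the parallel-axis identity `E‖z - c‖² = E‖z - E z‖² + ‖E z - c‖²`, the objective `R φ`
differs from `(1/d) E‖z φ - m φ₀‖²`, the objective with the mean frozen at `m φ₀`, by at most
`(1/d) ‖m φ - m φ₀‖²`. This is `o(‖φ - φ₀‖)` because `m` is differentiable at `φ₀`, so both
objectives have the same derivative at `φ₀`.
-/

open MeasureTheory Asymptotics
open scoped RealInnerProductSpace Topology

theorem HasFDerivAt.of_norm_sub_le_mul_norm_sub_sq {𝕜 E F G : Type*} [NontriviallyNormedField 𝕜]
    [NormedAddCommGroup E] [NormedSpace 𝕜 E] [NormedAddCommGroup F] [NormedSpace 𝕜 F]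
    [NormedAddCommGroup G] [NormedSpace 𝕜 G]
    {f g : E → F} {f' : E →L[𝕜] F} {k : E → G} {x₀ : E} {C : ℝ}
    (hf : HasFDerivAt f f' x₀) (hk : DifferentiableAt 𝕜 k x₀) (h₀ : g x₀ = f x₀)
    (hle : ∀ᶠ x in 𝓝 x₀, ‖g x - f x‖ ≤ C * ‖k x - k x₀‖ ^ 2) :
    HasFDerivAt g f' x₀ := by
  have hk_small : (fun x => ‖k x - k x₀‖) =o[𝓝 x₀] (fun _ => (1 : ℝ)) := by
    rw [isLittleO_one_iff]
    simpa using (hk.continuousAt.tendsto.sub_const (k x₀)).norm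
  have hsq : (fun x => ‖k x - k x₀‖ ^ 2) =o[𝓝 x₀] (fun x => x - x₀) := by
    simpa [sq, isLittleO_norm_right] using
      hk_small.mul_isBigO hk.hasFDerivAt.isBigO_sub.norm_norm
  have herr : (fun x => g x - f x) =o[𝓝 x₀] (fun x => x - x₀) :=
    (IsBigO.of_bound C (hle.mono fun x hx => by simpa using hx)).trans_isLittleO hsq
  have herr_deriv : HasFDerivAt (fun x => g x - f x) (0 : E →L[𝕜] F) x₀ :=
    .of_isLittleO (by simpa [h₀] using herr)
  simpa using (hf.add herr_deriv).congr_of_eventuallyEq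
    (.of_forall fun x => (add_sub_cancel (f x) (g x)).symm)

section Variance

variable {Ω E : Type*} [MeasurableSpace Ω] {μ : Measure Ω}
  [NormedAddCommGroup E] [InnerProductSpace ℝ E] {f : Ω → E}

theorem norm_sub_sq_eq_norm_sub_sq_add (x a b : E) :
    ‖x - b‖ ^ 2 = ‖x - a‖ ^ 2 + 2 * ⟪a - b, x - a⟫ + ‖a - b‖ ^ 2 := by
  rw [← sub_add_sub_cancel x a b, norm_add_sq_real, real_inner_comm]

theorem MeasureTheory.Integrable.norm_sub_sq [IsFiniteMeasure μ] (hf : Integrable f μ) {a : E}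
    (ha : Integrable (fun ω => ‖f ω - a‖ ^ 2) μ) (b : E) :
    Integrable (fun ω => ‖f ω - b‖ ^ 2) μ :=
  ((ha.fun_add (((hf.sub (integrable_const a)).const_inner (a - b)).const_mul 2)).fun_add
    (integrable_const _)).congr
    (.of_forall fun ω => (norm_sub_sq_eq_norm_sub_sq_add (f ω) a b).symm)

variable [IsProbabilityMeasure μ] [CompleteSpace E]

theorem integral_norm_sub_sq_eq_integral_norm_sub_integral_sq_add (hf : Integrable f μ) {c : E}
    (hc : Integrable (fun ω => ‖f ω - c‖ ^ 2) μ) :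
    ∫ ω, ‖f ω - c‖ ^ 2 ∂μ = ∫ ω, ‖f ω - ∫ ω, f ω ∂μ‖ ^ 2 ∂μ + ‖∫ ω, f ω ∂μ - c‖ ^ 2 := by
  set m := ∫ ω, f ω ∂μ
  have hcentered : Integrable (fun ω => f ω - m) μ := hf.sub (integrable_const m)
  have hcross : ∫ ω, ⟪m - c, f ω - m⟫ ∂μ = 0 := by
    rw [integral_inner hcentered, integral_sub hf (integrable_const m), integral_const,
      probReal_univ, one_smul, sub_self, inner_zero_right]
  have hsq : Integrable (fun ω => ‖f ω - m‖ ^ 2) μ := hf.norm_sub_sq hc m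
  have hlin : Integrable (fun ω => 2 * ⟪m - c, f ω - m⟫) μ := (hcentered.const_inner _).const_mul 2
  rw [integral_congr_ae (.of_forall fun ω => norm_sub_sq_eq_norm_sub_sq_add (f ω) m c),
    integral_add (hsq.fun_add hlin) (integrable_const _), integral_add hsq hlin,
    integral_const_mul, hcross, integral_const, probReal_univ, one_smul, mul_zero, add_zero]

-- An inequality rather than an identity, so that it also covers the case where `‖f - c‖²` is not
-- integrable and both integrals take the junk value `0`.
theorem abs_integral_norm_sub_integral_sq_sub_le (hf : Integrable f μ) (c : E) :
    |∫ ω, ‖f ω - ∫ ω, f ω ∂μ‖ ^ 2 ∂μ - ∫ ω, ‖f ω - c‖ ^ 2 ∂μ| ≤ ‖∫ ω, f ω ∂μ - c‖ ^ 2 := by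
  by_cases hc : Integrable (fun ω => ‖f ω - c‖ ^ 2) μ
  · rw [integral_norm_sub_sq_eq_integral_norm_sub_integral_sq_add hf hc, sub_add_cancel_left,
      abs_neg, abs_sq]
  · have hm : ¬ Integrable (fun ω => ‖f ω - ∫ ω, f ω ∂μ‖ ^ 2) μ :=
      fun hm => hc (hf.norm_sub_sq hm c)
    rw [integral_undef hc, integral_undef hm, sub_zero, abs_zero]
    positivity

end Variance

theorem population_variance_fderiv_mean_as_constant_general
    {p d : ℕ} {Ω : Type*} [MeasurableSpace Ω]
    (P : Measure Ω) [IsProbabilityMeasure P]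
    (z : EuclideanSpace ℝ (Fin p) → Ω → EuclideanSpace ℝ (Fin d))
    (Dz : Ω → (EuclideanSpace ℝ (Fin p) →L[ℝ] EuclideanSpace ℝ (Fin d)))
    (φ₀ : EuclideanSpace ℝ (Fin p))
    (hzint : ∀ φ, Integrable (z φ) P)
    (m : EuclideanSpace ℝ (Fin p) → EuclideanSpace ℝ (Fin d))
    (hm : ∀ φ, m φ = ∫ ω, z φ ω ∂P)
    (m' : EuclideanSpace ℝ (Fin p) →L[ℝ] EuclideanSpace ℝ (Fin d))
    (hm'deriv : HasFDerivAt m m' φ₀)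
    (G : EuclideanSpace ℝ (Fin d) → (EuclideanSpace ℝ (Fin p) →L[ℝ] ℝ))
    (hGderiv : ∀ c, HasFDerivAt (fun φ => ∫ ω, ‖z φ ω - c‖ ^ 2 ∂P) (G c) φ₀)
    (hGeq : ∀ c h, G c h = ∫ ω, 2 * ⟪Dz ω h, z φ₀ ω - c⟫ ∂P)
    (R : EuclideanSpace ℝ (Fin p) → ℝ)
    (hR : ∀ φ, R φ = (1 / (d : ℝ)) * ∫ ω, ‖z φ ω - m φ‖ ^ 2 ∂P) :
    ∃ R' : EuclideanSpace ℝ (Fin p) →L[ℝ] ℝ, HasFDerivAt R R' φ₀ ∧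
      ∀ h, R' h = (2 / (d : ℝ)) * ∫ ω, ⟪Dz ω h, z φ₀ ω - m φ₀⟫ ∂P := by
  have hclose : ∀ φ, ‖R φ - (1 / (d : ℝ)) * ∫ ω, ‖z φ ω - m φ₀‖ ^ 2 ∂P‖
      ≤ (1 / (d : ℝ)) * ‖m φ - m φ₀‖ ^ 2 := fun φ => by
    rw [hR, hm φ, ← mul_sub, norm_mul, Real.norm_of_nonneg (by positivity), Real.norm_eq_abs]
    exact mul_le_mul_of_nonneg_left (abs_integral_norm_sub_integral_sq_sub_le (hzint φ) _)
      (by positivity)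
  have hRderiv : HasFDerivAt R ((1 / (d : ℝ)) • G (m φ₀)) φ₀ :=
    ((hGderiv (m φ₀)).const_mul _).of_norm_sub_le_mul_norm_sub_sq hm'deriv.differentiableAt
      (hR φ₀) (.of_forall hclose)
  refine ⟨_, hRderiv, fun h => ?_⟩
  rw [smul_apply, smul_eq_mul, hGeq, integral_const_mul]
  ring

/-- Population version: let `(Ω, P)` be a probability space and
`z : ℝ^p × Ω → ℝ^d` with `φ ↦ z φ ω` differentiable at `φ₀` for each `ω`,
`z φ` and `ω ↦ Dz ω h` Bochner integrable, and assume differentiation under the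
integral sign is valid both for the mean `m φ = E[z φ]` and for
`φ ↦ E[‖z φ - c‖²]` (for every constant `c`).  Then with
`R φ = (1/d) E[‖z φ - m φ‖²]`, `R` is differentiable at `φ₀` and
`∇R(φ₀)[h] = (2/d) E[⟪D_φ z(φ₀,·)[h], z(φ₀,·) - m(φ₀)⟫]`. -/
theorem population_variance_fderiv_mean_as_constant
    {p d : ℕ} {Ω : Type*} [MeasurableSpace Ω]
    (P : Measure Ω) [IsProbabilityMeasure P]
    (z : EuclideanSpace ℝ (Fin p) → Ω → EuclideanSpace ℝ (Fin d))
    (Dz : Ω → (EuclideanSpace ℝ (Fin p) →L[ℝ] EuclideanSpace ℝ (Fin d)))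
    (φ₀ : EuclideanSpace ℝ (Fin p))
    (hz : ∀ ω, HasFDerivAt (fun φ => z φ ω) (Dz ω) φ₀)
    (hzint : ∀ φ, Integrable (z φ) P)
    (hDzint : ∀ h, Integrable (fun ω => Dz ω h) P)
    (m : EuclideanSpace ℝ (Fin p) → EuclideanSpace ℝ (Fin d))
    (hm : ∀ φ, m φ = ∫ ω, z φ ω ∂P)
    (m' : EuclideanSpace ℝ (Fin p) →L[ℝ] EuclideanSpace ℝ (Fin d))
    (hm'deriv : HasFDerivAt m m' φ₀)
    (hm'eq : ∀ h, m' h = ∫ ω, Dz ω h ∂P)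
    (G : EuclideanSpace ℝ (Fin d) → (EuclideanSpace ℝ (Fin p) →L[ℝ] ℝ))
    (hGderiv : ∀ c, HasFDerivAt (fun φ => ∫ ω, ‖z φ ω - c‖ ^ 2 ∂P) (G c) φ₀)
    (hGeq : ∀ c h, G c h = ∫ ω, 2 * ⟪Dz ω h, z φ₀ ω - c⟫ ∂P)
    (R : EuclideanSpace ℝ (Fin p) → ℝ)
    (hR : ∀ φ, R φ = (1 / (d : ℝ)) * ∫ ω, ‖z φ ω - m φ‖ ^ 2 ∂P) :
    ∃ R' : EuclideanSpace ℝ (Fin p) →L[ℝ] ℝ, HasFDerivAt R R' φ₀ ∧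
      ∀ h, R' h = (2 / (d : ℝ)) * ∫ ω, ⟪Dz ω h, z φ₀ ω - m φ₀⟫ ∂P :=
  population_variance_fderiv_mean_as_constant_general P z Dz φ₀ hzint m hm m' hm'deriv G hGderiv
    hGeq R hR
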